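/- Let f be a bounded continuous function on the open unit disc. Then ‖f‖_BWMO = 0 if and only if f is constant. -/

import Mathlib

open MeasureTheory Set

noncomputable section

/-- The normalized area measure on the plane: planar Lebesgue measure divided by `π`. -/
def dA : Measure ℂ := (ENNReal.ofReal Real.pi)⁻¹ • volume

/-- The open unit disc `𝔻`. -/
def unitDisc : Set ℂ := {z : ℂ | ‖z‖ < 1}

/-- The argument `θ` of `z`, normalized to lie in `[0, 2π)`. -/
def theta (z : ℂ) : ℝ := toIcoMod Real.two_pi_pos 0 (Complex.arg z)

/-- The angle of `ζ`, normalized to lie in `[theta z, theta z + 2π)`;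
for `ζ ∈ B(z)` this is the angle `θ̃ ∈ [θ, θ + π(1-r)]` of the paper's convention. -/
def angFrom (z ζ : ℂ) : ℝ := toIcoMod Real.two_pi_pos (theta z) (Complex.arg ζ)

/-- The polar rectangle `{ρ e^{iφ} : r₁ ≤ ρ ≤ r₂, φ₁ ≤ φ ≤ φ₂}`. -/
def polarRect (r₁ r₂ φ₁ φ₂ : ℝ) : Set ℂ :=
  {w : ℂ | ∃ ρ φ : ℝ, r₁ ≤ ρ ∧ ρ ≤ r₂ ∧ φ₁ ≤ φ ∧ φ ≤ φ₂ ∧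
    w = (ρ : ℂ) * Complex.exp ((φ : ℂ) * Complex.I)}

/-- The set `B(z)` for `z = r e^{iθ} ∈ 𝔻`. -/
def Bz (z : ℂ) : Set ℂ :=
  polarRect ‖z‖ (1 - (1 - ‖z‖) / 2) (theta z) (theta z + Real.pi * (1 - ‖z‖))

/-- The set `B(z, ζ)` for `ζ ∈ B(z)`. -/
def Bzz (z ζ : ℂ) : Set ℂ := polarRect ‖z‖ ‖ζ‖ (theta z) (angFrom z ζ)

/-- The set `B(ζ₁, ζ₂)` for points `ζ₁ ≾ ζ₂` of `B(z)`. -/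
def Bsub (z ζ₁ ζ₂ : ℂ) : Set ℂ := polarRect ‖ζ₁‖ ‖ζ₂‖ (angFrom z ζ₁) (angFrom z ζ₂)

/-- The relation `ζ₁ ≾ ζ₂` for points of `B(z)`: `ρ₁ ≤ ρ₂` and `φ₁ ≤ φ₂`. -/
def precSim (z ζ₁ ζ₂ : ℂ) : Prop := ‖ζ₁‖ ≤ ‖ζ₂‖ ∧ angFrom z ζ₁ ≤ angFrom z ζ₂

/-- The average `f̂_K = (1/|K|) ∫_K f dA` of `f` over a set `K`. -/
def avgOn (f : ℂ → ℂ) (K : Set ℂ) : ℂ := ((dA K).toReal)⁻¹ • ∫ w in K, f w ∂dA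

/-- The average function `f̂(z) = f̂_{B(z)}`. -/
def avg (f : ℂ → ℂ) (z : ℂ) : ℂ := avgOn f (Bz z)

/-- The quantity `(1/|B(z)|) |∫_{B(z,ζ)} (f(ξ) - f̂(z)) dA(ξ)|`. -/
def wQuot (f : ℂ → ℂ) (z ζ : ℂ) : ℝ :=
  ((dA (Bz z)).toReal)⁻¹ * ‖∫ ξ in Bzz z ζ, (f ξ - avg f z) ∂dA‖

/-- The BWMO condition: `‖f‖_BWMO < ∞`. -/
def IsBWMO (f : ℂ → ℂ) : Prop := ∃ C : ℝ, ∀ z ∈ unitDisc, ∀ ζ ∈ Bz z, wQuot f z ζ ≤ C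

/-- The BWMO seminorm `‖f‖_BWMO`. -/
def bwmoNorm (f : ℂ → ℂ) : ℝ :=
  sSup {c : ℝ | ∃ z ∈ unitDisc, ∃ ζ ∈ Bz z, c = wQuot f z ζ}

/-- The VWMO condition:
`(1/|B(z)|) sup_{ζ ∈ B(z)} |∫_{B(z,ζ)} (f - f̂(z)) dA| → 0` as `|z| → 1`. -/
def IsVWMO (f : ℂ → ℂ) : Prop :=
  ∀ ε > (0:ℝ), ∃ r₀ < (1:ℝ), ∀ z ∈ unitDisc, r₀ ≤ ‖z‖ → ∀ ζ ∈ Bz z, wQuot f z ζ ≤ ε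

/-- The Bergman-metric disc `D(z,1)` of radius `1` centered at `z`. -/
def Dball (z : ℂ) : Set ℂ :=
  {w : ℂ | ‖w‖ < 1 ∧ ‖(z - w) / (1 - (starRingEnd ℂ) w * z)‖ < Real.tanh 1}

/-- The hyperbolic average `f̂₁(z) = (1/|D(z,1)|) ∫_{D(z,1)} f dA` of a real-valued `f`. -/
def avg1 (f : ℂ → ℝ) (z : ℂ) : ℝ := ((dA (Dball z)).toReal)⁻¹ * ∫ w in Dball z, f w ∂dA

/-- The mean oscillation `(1/|D(z,1)|) ∫_{D(z,1)} |f - f̂₁(z)| dA` of a real-valued `f`. -/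
def meanOsc1 (f : ℂ → ℝ) (z : ℂ) : ℝ :=
  ((dA (Dball z)).toReal)⁻¹ * ∫ ξ in Dball z, |f ξ - avg1 f z| ∂dA

/-- The Berezin transform `f̃(z) = ∫_𝔻 f(w) |k_z(w)|² dA(w)`,
where `k_z(w) = (1-|z|²)/(1-w z̄)²`. -/
def berezin (f : ℂ → ℂ) (z : ℂ) : ℂ :=
  ∫ w in unitDisc, f w * ((((1 - ‖z‖ ^ 2) ^ 2 / ‖1 - w * (starRingEnd ℂ) z‖ ^ 4 : ℝ)) : ℂ) ∂dA

/-- The example symbol of Section 4: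
`f(r e^{iθ}) = (1/(r (1-r)^{b-β})) sin(1/(1-r)^b)` for `r ≥ 1/2`, and `1` for `r < 1/2`. -/
def fEx (b β : ℝ) (z : ℂ) : ℝ :=
  if ‖z‖ < 1 / 2 then 1
  else (1 / (‖z‖ * (1 - ‖z‖) ^ (b - β))) * Real.sin (1 / (1 - ‖z‖) ^ b)

end

/-!
If `‖f‖_BWMO = 0` (a genuine supremum, since `f` is bounded), then for every `z` the integral of
`f - f̂(z)` over each anchored polar rectangle `B(z, ζ)` vanishes. By inclusion–exclusion (two polar
rectangles sharing a side meet in an arc or a radial segment, a null set) it then vanishes over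
every polar sub-rectangle of `B(z)`, and continuity forces `f = f̂(z) = f(z)` on `B(z)`.
As `B(z)` contains the rotations `z e^{it}`, `0 ≤ t ≤ π(1 - |z|)`, `f` is constant on circles,
and as `B(r)` contains `[r, (1 + r)/2]` for `r ≥ 0`, a dyadic induction makes `f` constant on
`[0, 1)`.
-/

open Complex
open scoped Real ENNReal

section PolarRect

variable {r₁ r₂ r₃ φ₁ φ₂ φ₃ : ℝ}

lemma polarRect_mono {r₁' r₂' φ₁' φ₂' : ℝ} (h₁ : r₁' ≤ r₁) (h₂ : r₂ ≤ r₂') (h₃ : φ₁' ≤ φ₁)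
    (h₄ : φ₂ ≤ φ₂') : polarRect r₁ r₂ φ₁ φ₂ ⊆ polarRect r₁' r₂' φ₁' φ₂' := by
  rintro _ ⟨ρ, φ, hρ₁, hρ₂, hφ₁, hφ₂, rfl⟩
  exact ⟨ρ, φ, h₁.trans hρ₁, hρ₂.trans h₂, h₃.trans hφ₁, hφ₂.trans h₄, rfl⟩

lemma polarRect_eq_image (r₁ r₂ φ₁ φ₂ : ℝ) :
    polarRect r₁ r₂ φ₁ φ₂ =
      (fun p : ℝ × ℝ => (p.1 : ℂ) * exp (p.2 * I)) '' (Icc r₁ r₂ ×ˢ Icc φ₁ φ₂) := by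
  ext w
  simp only [polarRect, mem_image, mem_prod, mem_Icc, Prod.exists]
  grind

lemma isCompact_polarRect (r₁ r₂ φ₁ φ₂ : ℝ) : IsCompact (polarRect r₁ r₂ φ₁ φ₂) := by
  rw [polarRect_eq_image]
  exact (isCompact_Icc.prod isCompact_Icc).image (by fun_prop)

lemma norm_ofReal_mul_exp_mul_I {ρ : ℝ} (hρ : 0 ≤ ρ) (φ : ℝ) : ‖(ρ : ℂ) * exp (φ * I)‖ = ρ := by
  rw [norm_mul, norm_exp_ofReal_mul_I, mul_one, norm_real, Real.norm_of_nonneg hρ]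

lemma norm_mem_Icc_of_mem_polarRect {w : ℂ} (h₀ : 0 ≤ r₁) (hw : w ∈ polarRect r₁ r₂ φ₁ φ₂) :
    ‖w‖ ∈ Icc r₁ r₂ := by
  obtain ⟨ρ, φ, hρ₁, hρ₂, -, -, rfl⟩ := hw
  rw [norm_ofReal_mul_exp_mul_I (h₀.trans hρ₁)]
  exact ⟨hρ₁, hρ₂⟩

lemma exp_image_subset_polarRect (h₁ : 0 < r₁) (h₂ : 0 < r₂) :
    exp '' (re ⁻¹' Ioo (Real.log r₁) (Real.log r₂) ∩ im ⁻¹' Ioo φ₁ φ₂) ⊆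
      polarRect r₁ r₂ φ₁ φ₂ := by
  rintro _ ⟨w, ⟨⟨hre₁, hre₂⟩, hφ₁, hφ₂⟩, rfl⟩
  refine ⟨Real.exp w.re, w.im, ((Real.log_lt_iff_lt_exp h₁).1 hre₁).le,
    ((Real.lt_log_iff_exp_lt h₂).1 hre₂).le, hφ₁.le, hφ₂.le, ?_⟩
  rw [exp_eq_exp_re_mul_sin_add_cos, ← exp_mul_I, ← ofReal_exp]

lemma measure_polarRect_pos {μ : Measure ℂ} [μ.IsOpenPosMeasure] (h₀ : 0 ≤ r₁) (h₁₂ : r₁ < r₂)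
    (hφ : φ₁ < φ₂) : 0 < μ (polarRect r₁ r₂ φ₁ φ₂) := by
  obtain ⟨r, hr₁, hr₂⟩ := exists_between h₁₂
  have hr : 0 < r := h₀.trans_lt hr₁
  set box := re ⁻¹' Ioo (Real.log r) (Real.log r₂) ∩ im ⁻¹' Ioo φ₁ φ₂
  have hbox : IsOpen box :=
    (isOpen_Ioo.preimage continuous_re).inter (isOpen_Ioo.preimage continuous_im)
  have hlog : Real.log r < Real.log r₂ := Real.log_lt_log hr hr₂
  have hne : box.Nonempty := ⟨⟨(Real.log r + Real.log r₂) / 2, (φ₁ + φ₂) / 2⟩, by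
    simp only [box, mem_inter_iff, mem_preimage, mem_Ioo]
    constructor <;> constructor <;> linarith⟩
  calc 0 < μ (exp '' box) := (isOpenMap_exp _ hbox).measure_pos μ (hne.image exp)
    _ ≤ μ (polarRect r₁ r₂ φ₁ φ₂) := measure_mono <|
      (exp_image_subset_polarRect hr (hr.trans hr₂)).trans
        (polarRect_mono hr₁.le le_rfl le_rfl le_rfl)


lemma polarRect_union_radius (h₁₂ : r₁ ≤ r₂) (h₂₃ : r₂ ≤ r₃) :
    polarRect r₁ r₂ φ₁ φ₂ ∪ polarRect r₂ r₃ φ₁ φ₂ = polarRect r₁ r₃ φ₁ φ₂ := by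
  refine Subset.antisymm (union_subset (polarRect_mono le_rfl h₂₃ le_rfl le_rfl)
    (polarRect_mono h₁₂ le_rfl le_rfl le_rfl)) ?_
  rintro _ ⟨ρ, φ, hρ₁, hρ₃, hφ₁, hφ₂, rfl⟩
  rcases le_total ρ r₂ with hρ | hρ
  · exact Or.inl ⟨ρ, φ, hρ₁, hρ, hφ₁, hφ₂, rfl⟩
  · exact Or.inr ⟨ρ, φ, hρ, hρ₃, hφ₁, hφ₂, rfl⟩

lemma polarRect_union_angle (h₁₂ : φ₁ ≤ φ₂) (h₂₃ : φ₂ ≤ φ₃) :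
    polarRect r₁ r₂ φ₁ φ₂ ∪ polarRect r₁ r₂ φ₂ φ₃ = polarRect r₁ r₂ φ₁ φ₃ := by
  refine Subset.antisymm (union_subset (polarRect_mono le_rfl le_rfl le_rfl h₂₃)
    (polarRect_mono le_rfl le_rfl h₁₂ le_rfl)) ?_
  rintro _ ⟨ρ, φ, hρ₁, hρ₂, hφ₁, hφ₃, rfl⟩
  rcases le_total φ φ₂ with hφ | hφ
  · exact Or.inl ⟨ρ, φ, hρ₁, hρ₂, hφ₁, hφ, rfl⟩
  · exact Or.inr ⟨ρ, φ, hρ₁, hρ₂, hφ, hφ₃, rfl⟩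

lemma polarRect_inter_radius_subset_sphere {φ₁' φ₂' : ℝ} (h₀ : 0 ≤ r₁) :
    polarRect r₁ r₂ φ₁ φ₂ ∩ polarRect r₂ r₃ φ₁' φ₂' ⊆ Metric.sphere 0 r₂ := by
  rintro w ⟨hw₁, hw₂⟩
  have hle := norm_mem_Icc_of_mem_polarRect h₀ hw₁
  have hge := norm_mem_Icc_of_mem_polarRect (h₀.trans (hle.1.trans hle.2)) hw₂
  rw [mem_sphere_zero_iff_norm]
  exact le_antisymm hle.2 hge.1

lemma polarRect_inter_angle_subset_span {r₁' r₂' : ℝ} (h₀ : 0 ≤ r₁) (h₀' : 0 ≤ r₁')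
    (h : φ₃ - φ₁ < 2 * π) :
    polarRect r₁ r₂ φ₁ φ₂ ∩ polarRect r₁' r₂' φ₂ φ₃ ⊆
      Submodule.span ℝ {exp (φ₂ * I)} := by
  rintro w ⟨⟨ρ, φ, hρ, -, hφ₁, hφ₂, rfl⟩, ⟨ρ', φ', hρ', -, hφ₂', hφ₃', hw⟩⟩
  have hρρ' : ρ = ρ' := by
    have hnorm := congrArg norm hw
    rwa [norm_ofReal_mul_exp_mul_I (h₀.trans hρ), norm_ofReal_mul_exp_mul_I (h₀'.trans hρ')]
      at hnorm
  subst hρρ'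
  rcases (h₀.trans hρ).eq_or_lt with hρ0 | hρ0
  · simp [← hρ0]
  have hexp : exp (φ * I) = exp (φ' * I) :=
    mul_left_cancel₀ (ofReal_ne_zero.2 hρ0.ne') hw
  have hφφ' : φ = φ' := Circle.exp_injOn_Icc h ⟨hφ₁, by linarith⟩ ⟨by linarith, hφ₃'⟩
    (Subtype.ext (by simpa [Circle.coe_exp] using hexp))
  refine Submodule.mem_span_singleton.2 ⟨ρ, ?_⟩
  rw [real_smul, show φ = φ₂ by linarith]

lemma span_exp_mul_I_ne_top (φ : ℝ) : Submodule.span ℝ {exp (φ * I)} ≠ ⊤ := by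
  intro htop
  have h := finrank_span_singleton (K := ℝ) (exp_ne_zero (φ * I))
  rw [htop, finrank_top, finrank_real_complex] at h
  norm_num at h

end PolarRect

section PolarRectIntegral

variable {E : Type*} [NormedAddCommGroup E] [NormedSpace ℝ E]

lemma setIntegral_ne_zero_of_forall_norm_sub_le [CompleteSpace E] {α : Type*} [MeasurableSpace α]
    {μ : Measure α} {f : α → E} {s : Set α} {a : E} (ha : a ≠ 0) (hs : μ s ≠ ∞)
    (hs₀ : μ s ≠ 0) (hf : IntegrableOn f s μ) (hclose : ∀ x ∈ s, ‖f x - a‖ ≤ ‖a‖ / 2) :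
    ∫ x in s, f x ∂μ ≠ 0 := by
  intro h0
  have hbound := norm_setIntegral_le_of_norm_le_const hs.lt_top hclose
  rw [integral_sub hf (integrableOn_const hs), h0, setIntegral_const, zero_sub, norm_neg,
    norm_smul, Real.norm_of_nonneg measureReal_nonneg] at hbound
  have hμs : 0 < μ.real s := ENNReal.toReal_pos hs₀ hs
  have hna : 0 < ‖a‖ := norm_pos_iff.2 ha
  nlinarith

variable {μ : Measure ℂ} {g : ℂ → E} {r₁ r₂ r₃ φ₁ φ₂ φ₃ r R θ Θ : ℝ}

lemma setIntegral_polarRect_union_radius (hμ : μ ≪ volume) (h₀ : 0 ≤ r₁) (h₁₂ : r₁ ≤ r₂)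
    (h₂₃ : r₂ ≤ r₃) (hg : IntegrableOn g (polarRect r₁ r₃ φ₁ φ₂) μ) :
    ∫ x in polarRect r₁ r₃ φ₁ φ₂, g x ∂μ =
      ∫ x in polarRect r₁ r₂ φ₁ φ₂, g x ∂μ + ∫ x in polarRect r₂ r₃ φ₁ φ₂, g x ∂μ := by
  rw [← polarRect_union_radius h₁₂ h₂₃] at hg ⊢
  exact setIntegral_union₀
    (hμ (measure_mono_null (polarRect_inter_radius_subset_sphere h₀)
      (Measure.addHaar_sphere volume 0 r₂)))
    (isCompact_polarRect _ _ _ _).measurableSet.nullMeasurableSet hg.left_of_union hg.right_of_union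

lemma setIntegral_polarRect_union_angle (hμ : μ ≪ volume) (h₀ : 0 ≤ r₁) (h₁₂ : φ₁ ≤ φ₂)
    (h₂₃ : φ₂ ≤ φ₃) (h : φ₃ - φ₁ < 2 * π) (hg : IntegrableOn g (polarRect r₁ r₂ φ₁ φ₃) μ) :
    ∫ x in polarRect r₁ r₂ φ₁ φ₃, g x ∂μ =
      ∫ x in polarRect r₁ r₂ φ₁ φ₂, g x ∂μ + ∫ x in polarRect r₁ r₂ φ₂ φ₃, g x ∂μ := by
  rw [← polarRect_union_angle h₁₂ h₂₃] at hg ⊢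
  exact setIntegral_union₀
    (hμ (measure_mono_null (polarRect_inter_angle_subset_span h₀ h₀ h)
      (Measure.addHaar_submodule volume _ (span_exp_mul_I_ne_top φ₂))))
    (isCompact_polarRect _ _ _ _).measurableSet.nullMeasurableSet hg.left_of_union hg.right_of_union

lemma setIntegral_polarRect_eq_zero_of_anchored (hμ : μ ≪ volume) (hr : 0 ≤ r)
    (hΘ : Θ - θ < 2 * π) (hg : IntegrableOn g (polarRect r R θ Θ) μ)
    (h : ∀ ρ ∈ Ioc r R, ∀ φ ∈ Icc θ Θ, ∫ x in polarRect r ρ θ φ, g x ∂μ = 0)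
    {ρ₁ ρ₂ φ₁ φ₂ : ℝ} (hρ₁ : r ≤ ρ₁) (hρ : ρ₁ < ρ₂) (hρ₂ : ρ₂ ≤ R) (hφ₁ : θ ≤ φ₁)
    (hφ : φ₁ ≤ φ₂) (hφ₂ : φ₂ ≤ Θ) :
    ∫ x in polarRect ρ₁ ρ₂ φ₁ φ₂, g x ∂μ = 0 := by
  have hradial : ∀ φ ∈ Icc θ Θ, ∫ x in polarRect ρ₁ ρ₂ θ φ, g x ∂μ = 0 := by
    intro φ hφ
    rcases hρ₁.eq_or_lt with rfl | hlt
    · exact h ρ₂ ⟨hρ, hρ₂⟩ φ hφ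
    have hsplit := setIntegral_polarRect_union_radius hμ hr hρ₁ hρ.le
      (hg.mono_set (polarRect_mono le_rfl hρ₂ le_rfl hφ.2))
    rwa [h ρ₂ ⟨hlt.trans hρ, hρ₂⟩ φ hφ, h ρ₁ ⟨hlt, hρ.le.trans hρ₂⟩ φ hφ, zero_add, eq_comm]
      at hsplit
  have hsplit := setIntegral_polarRect_union_angle hμ (hr.trans hρ₁) hφ₁ hφ (by linarith)
    (hg.mono_set (polarRect_mono hρ₁ hρ₂ le_rfl hφ₂))
  rwa [hradial φ₂ ⟨hφ₁.trans hφ, hφ₂⟩, hradial φ₁ ⟨hφ₁, hφ.trans hφ₂⟩, zero_add, eq_comm]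
    at hsplit

lemma eqOn_zero_of_setIntegral_polarRect_eq_zero [CompleteSpace E] [μ.IsOpenPosMeasure]
    [IsFiniteMeasureOnCompacts μ] (hr : 0 ≤ r) (hrR : r < R) (hθΘ : θ < Θ)
    (hg : ContinuousOn g (polarRect r R θ Θ))
    (h : ∀ ρ₁ ρ₂ φ₁ φ₂, r ≤ ρ₁ → ρ₁ < ρ₂ → ρ₂ ≤ R → θ ≤ φ₁ → φ₁ < φ₂ → φ₂ ≤ Θ →
      ∫ x in polarRect ρ₁ ρ₂ φ₁ φ₂, g x ∂μ = 0) :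
    EqOn g 0 (polarRect r R θ Θ) := by
  rintro _ ⟨ρ₀, φ₀, hρ₀r, hρ₀R, hφ₀θ, hφ₀Θ, rfl⟩
  by_contra ha
  set a := g (ρ₀ * exp (φ₀ * I))
  have hcont : ContinuousWithinAt (fun p : ℝ × ℝ => g (p.1 * exp (p.2 * I)))
      (Icc r R ×ˢ Icc θ Θ) (ρ₀, φ₀) :=
    (hg _ ⟨ρ₀, φ₀, hρ₀r, hρ₀R, hφ₀θ, hφ₀Θ, rfl⟩).comp
      (f := fun p : ℝ × ℝ => (p.1 : ℂ) * exp (p.2 * I))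
      (by fun_prop : Continuous _).continuousWithinAt
      fun p (hp : p ∈ Icc r R ×ˢ Icc θ Θ) => ⟨p.1, p.2, hp.1.1, hp.1.2, hp.2.1, hp.2.2, rfl⟩
  obtain ⟨δ, hδ, hclose⟩ := Metric.continuousWithinAt_iff.1 hcont (‖a‖ / 2) (by positivity)
  have hρ : max r (ρ₀ - δ / 2) < min R (ρ₀ + δ / 2) :=
    max_lt (lt_min hrR (by linarith)) (lt_min (by linarith) (by linarith))
  have hφ : max θ (φ₀ - δ / 2) < min Θ (φ₀ + δ / 2) :=
    max_lt (lt_min hθΘ (by linarith)) (lt_min (by linarith) (by linarith))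
  have hsub : polarRect (max r (ρ₀ - δ / 2)) (min R (ρ₀ + δ / 2)) (max θ (φ₀ - δ / 2))
      (min Θ (φ₀ + δ / 2)) ⊆ polarRect r R θ Θ :=
    polarRect_mono (le_max_left _ _) (min_le_left _ _) (le_max_left _ _) (min_le_left _ _)
  refine setIntegral_ne_zero_of_forall_norm_sub_le ha
    (isCompact_polarRect _ _ _ _).measure_lt_top.ne
    (measure_polarRect_pos (hr.trans (le_max_left _ _)) hρ hφ).ne'
    ((hg.mono hsub).integrableOn_compact (isCompact_polarRect _ _ _ _)) ?_
    (h _ _ _ _ (le_max_left _ _) hρ (min_le_left _ _) (le_max_left _ _) hφ (min_le_left _ _))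
  rintro _ ⟨ρ, φ, hρ₁, hρ₂, hφ₁, hφ₂, rfl⟩
  have hnear : dist (ρ, φ) (ρ₀, φ₀) < δ := by
    rw [Prod.dist_eq, max_lt_iff, Real.dist_eq, Real.dist_eq, abs_sub_lt_iff, abs_sub_lt_iff]
    refine ⟨⟨?_, ?_⟩, ?_, ?_⟩ <;>
      linarith [le_max_right r (ρ₀ - δ / 2), min_le_right R (ρ₀ + δ / 2),
        le_max_right θ (φ₀ - δ / 2), min_le_right Θ (φ₀ + δ / 2)]
  have hmem : (ρ, φ) ∈ Icc r R ×ˢ Icc θ Θ :=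
    ⟨⟨(le_max_left _ _).trans hρ₁, hρ₂.trans (min_le_left _ _)⟩,
      ⟨(le_max_left _ _).trans hφ₁, hφ₂.trans (min_le_left _ _)⟩⟩
  have hgclose := hclose hmem hnear
  rw [dist_eq_norm] at hgclose
  exact hgclose.le

end PolarRectIntegral

lemma apply_eq_apply_of_forall_add_eq {α : Type*} {g : ℝ → α} {a δ : ℝ} (hδ : 0 < δ)
    (h : ∀ x, a ≤ x → ∀ t ∈ Icc 0 δ, g (x + t) = g x) {x : ℝ} (hx : a ≤ x) : g x = g a := by
  have hsteps : ∀ n : ℕ, ∀ x, a ≤ x → x ≤ a + n * δ → g x = g a := by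
    intro n
    induction n with
    | zero => intro x hx₁ hx₂; rw [le_antisymm (by simpa using hx₂) hx₁]
    | succ n ih =>
      intro x hx₁ hx₂
      rcases le_total x (a + δ) with hxδ | hxδ
      · simpa using h a le_rfl (x - a) ⟨by linarith, by linarith⟩
      · rw [← sub_add_cancel x δ, h (x - δ) (by linarith) δ ⟨hδ.le, le_rfl⟩,
          ih (x - δ) (by linarith) (by push_cast at hx₂; linarith)]
  obtain ⟨n, hn⟩ := exists_nat_ge ((x - a) / δ)
  exact hsteps n x hx (by linarith [(div_le_iff₀ hδ).1 hn])

section BWMO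

lemma dA_absolutelyContinuous : dA ≪ volume := Measure.smul_absolutelyContinuous

instance : dA.IsOpenPosMeasure :=
  Measure.isOpenPosMeasure_smul volume (ENNReal.inv_ne_zero.2 ENNReal.ofReal_ne_top)

instance : IsFiniteMeasureOnCompacts dA :=
  IsFiniteMeasureOnCompacts.smul volume
    (ENNReal.inv_ne_top.2 (ENNReal.ofReal_pos.2 Real.pi_pos).ne')

lemma ofReal_norm_mul_exp_theta (z : ℂ) : (‖z‖ : ℂ) * exp (theta z * I) = z := by
  rw [theta, ← self_sub_toIcoDiv_zsmul]
  push_cast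
  rw [exp_mul_I_periodic.sub_zsmul_eq, norm_mul_exp_arg_mul_I]

lemma theta_nonneg (z : ℂ) : 0 ≤ theta z := (toIcoMod_mem_Ico _ _ _).1

lemma theta_ofReal {r : ℝ} (hr : 0 ≤ r) : theta r = 0 := by
  rw [theta, arg_ofReal_of_nonneg hr, toIcoMod_apply_left]

lemma angFrom_ofReal_mul_exp {z : ℂ} {ρ φ : ℝ} (hρ : 0 < ρ)
    (hφ : φ ∈ Ico (theta z) (theta z + 2 * π)) : angFrom z (ρ * exp (φ * I)) = φ := by
  rw [angFrom, arg_real_mul _ hρ, arg_exp_mul_I, toIcoMod_toIocMod, (toIcoMod_eq_self _).2 hφ]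

lemma ofReal_mul_exp_mem_Bz {z : ℂ} {ρ t : ℝ} (hρ₁ : ‖z‖ ≤ ρ) (hρ₂ : ρ ≤ 1 - (1 - ‖z‖) / 2)
    (ht₀ : 0 ≤ t) (ht : t ≤ π * (1 - ‖z‖)) : (ρ : ℂ) * exp ((theta z + t : ℝ) * I) ∈ Bz z :=
  ⟨ρ, theta z + t, hρ₁, hρ₂, by linarith, by linarith, rfl⟩

variable {z : ℂ}

lemma mem_Bz_self (hz : z ∈ unitDisc) : z ∈ Bz z := by
  have hz₁ : ‖z‖ < 1 := hz
  have hmem := ofReal_mul_exp_mem_Bz (z := z) le_rfl (by linarith) le_rfl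
    (mul_nonneg Real.pi_pos.le (by linarith))
  rwa [add_zero, ofReal_norm_mul_exp_theta] at hmem

lemma Bz_subset_unitDisc (hz : z ∈ unitDisc) : Bz z ⊆ unitDisc := fun w hw =>
  (norm_mem_Icc_of_mem_polarRect (norm_nonneg z) hw).2.trans_lt (by linarith [show ‖z‖ < 1 from hz])

lemma Bzz_subset_Bz (hz : z ∈ unitDisc) {ζ : ℂ} (hζ : ζ ∈ Bz z) : Bzz z ζ ⊆ Bz z := by
  obtain ⟨ρ, φ, hρ₁, hρ₂, hφ₁, hφ₂, rfl⟩ := hζ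
  rcases ((norm_nonneg z).trans hρ₁).eq_or_lt with rfl | hρ
  · -- `ζ = 0` forces `z = 0`, and then `B(z, ζ) = {0}`
    intro w hw
    have hw₀ := norm_mem_Icc_of_mem_polarRect (norm_nonneg z) hw
    simp only [ofReal_zero, zero_mul, norm_zero] at hw₀
    obtain rfl : z = 0 := norm_eq_zero.1 (le_antisymm (hw₀.1.trans hw₀.2) (norm_nonneg z))
    obtain rfl : w = 0 := norm_eq_zero.1 (le_antisymm hw₀.2 (norm_nonneg w))
    exact mem_Bz_self hz
  · have hφ : φ < theta z + 2 * π := by nlinarith [Real.pi_pos, norm_nonneg z]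
    rw [Bzz, norm_ofReal_mul_exp_mul_I hρ.le, angFrom_ofReal_mul_exp hρ ⟨hφ₁, hφ⟩]
    exact polarRect_mono le_rfl hρ₂ le_rfl hφ₂

lemma dA_Bz_toReal_pos (hz : z ∈ unitDisc) : 0 < (dA (Bz z)).toReal := by
  have hz₁ : ‖z‖ < 1 := hz
  exact ENNReal.toReal_pos
    (measure_polarRect_pos (norm_nonneg z) (by linarith)
      (by nlinarith [Real.pi_pos])).ne'
    (isCompact_polarRect _ _ _ _).measure_lt_top.ne

variable {f : ℂ → ℂ}

lemma wQuot_nonneg {ζ : ℂ} : 0 ≤ wQuot f z ζ := by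
  unfold wQuot
  positivity

lemma setIntegral_Bzz_eq_zero_of_wQuot_eq_zero (hz : z ∈ unitDisc) {ζ : ℂ}
    (h : wQuot f z ζ = 0) : ∫ ξ in Bzz z ζ, (f ξ - avg f z) ∂dA = 0 := by
  rw [wQuot, mul_eq_zero, inv_eq_zero] at h
  exact norm_eq_zero.1 (h.resolve_left (dA_Bz_toReal_pos hz).ne')

lemma eq_of_mem_Bz_of_wQuot_eq_zero (hc : ContinuousOn f unitDisc) (hz : z ∈ unitDisc)
    (h : ∀ ζ ∈ Bz z, wQuot f z ζ = 0) {w : ℂ} (hw : w ∈ Bz z) : f w = f z := by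
  have hz₁ : ‖z‖ < 1 := hz
  have hwidth : π * (1 - ‖z‖) < 2 * π := by nlinarith [Real.pi_pos, norm_nonneg z]
  have hg : ContinuousOn (fun ξ => f ξ - avg f z) (Bz z) :=
    (hc.mono (Bz_subset_unitDisc hz)).sub continuousOn_const
  have hanchored : ∀ ρ ∈ Ioc ‖z‖ (1 - (1 - ‖z‖) / 2),
      ∀ φ ∈ Icc (theta z) (theta z + π * (1 - ‖z‖)),
      ∫ ξ in polarRect ‖z‖ ρ (theta z) φ, (f ξ - avg f z) ∂dA = 0 := by
    intro ρ hρ φ hφ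
    have hρ₀ : 0 < ρ := (norm_nonneg z).trans_lt hρ.1
    have hBzz : Bzz z (ρ * exp (φ * I)) = polarRect ‖z‖ ρ (theta z) φ := by
      rw [Bzz, norm_ofReal_mul_exp_mul_I hρ₀.le,
        angFrom_ofReal_mul_exp hρ₀ ⟨hφ.1, by linarith [hφ.2]⟩]
    rw [← hBzz]
    exact setIntegral_Bzz_eq_zero_of_wQuot_eq_zero hz (h _ ⟨ρ, φ, hρ.1.le, hρ.2, hφ.1, hφ.2, rfl⟩)
  have hvanish : EqOn (fun ξ => f ξ - avg f z) 0 (Bz z) :=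
    eqOn_zero_of_setIntegral_polarRect_eq_zero (norm_nonneg z) (by linarith)
      (by nlinarith [Real.pi_pos]) hg
      fun _ _ _ _ hρ₁ hρ hρ₂ hφ₁ hφ hφ₂ =>
        setIntegral_polarRect_eq_zero_of_anchored dA_absolutelyContinuous (norm_nonneg z)
          (by linarith) (hg.integrableOn_compact (isCompact_polarRect _ _ _ _)) hanchored
          hρ₁ hρ hρ₂ hφ₁ hφ.le hφ₂
  have hfw := hvanish hw
  have hfz := hvanish (mem_Bz_self hz)
  simp only [Pi.zero_apply, sub_eq_zero] at hfw hfz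
  rw [hfw, hfz]

end BWMO

section Chain

variable {f : ℂ → ℂ} (hB : ∀ z ∈ unitDisc, ∀ w ∈ Bz z, f w = f z)
include hB

lemma apply_mul_exp_eq {z : ℂ} (hz : z ∈ unitDisc) {t : ℝ} (ht₀ : 0 ≤ t)
    (ht : t ≤ π * (1 - ‖z‖)) : f (z * exp (t * I)) = f z := by
  have hz₁ : ‖z‖ < 1 := hz
  have hmem := ofReal_mul_exp_mem_Bz (z := z) le_rfl (by linarith) ht₀ ht
  rw [ofReal_add, add_mul, exp_add, ← mul_assoc, ofReal_norm_mul_exp_theta] at hmem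
  exact hB z hz _ hmem

lemma apply_eq_apply_norm {w : ℂ} (hw : w ∈ unitDisc) : f w = f ‖w‖ := by
  have hw₁ : ‖w‖ < 1 := hw
  have hstep : ∀ x, 0 ≤ x → ∀ t ∈ Icc 0 (π * (1 - ‖w‖)),
      f (‖w‖ * exp ((x + t : ℝ) * I)) = f (‖w‖ * exp (x * I)) := by
    intro x _ t ht
    have hnorm := norm_ofReal_mul_exp_mul_I (norm_nonneg w) x
    have hz : (‖w‖ * exp (x * I) : ℂ) ∈ unitDisc := by
      show ‖_‖ < 1
      rwa [hnorm]
    have hrot := apply_mul_exp_eq hB hz ht.1 (by rw [hnorm]; exact ht.2)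
    simpa only [ofReal_add, add_mul, exp_add, mul_assoc] using hrot
  have hcircle := apply_eq_apply_of_forall_add_eq (g := fun φ : ℝ => f (‖w‖ * exp (φ * I)))
    (mul_pos Real.pi_pos (sub_pos.2 hw₁)) hstep (theta_nonneg w)
  simpa [ofReal_norm_mul_exp_theta] using hcircle

lemma apply_ofReal_eq {r s : ℝ} (hr₀ : 0 ≤ r) (hr : r < 1) (hs₁ : r ≤ s)
    (hs₂ : s ≤ 1 - (1 - r) / 2) : f s = f r := by
  have hnorm : ‖(r : ℂ)‖ = r := by rw [norm_real, Real.norm_of_nonneg hr₀]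
  have hmem := ofReal_mul_exp_mem_Bz (z := r) (ρ := s) (t := 0) (by rwa [hnorm])
    (by rwa [hnorm]) le_rfl (by rw [hnorm]; nlinarith [Real.pi_pos])
  rw [theta_ofReal hr₀, add_zero, ofReal_zero, zero_mul, exp_zero, mul_one] at hmem
  exact hB r (show ‖(r : ℂ)‖ < 1 by rwa [hnorm]) s hmem

lemma apply_ofReal_eq_apply_zero {s : ℝ} (hs₀ : 0 ≤ s) (hs : s < 1) : f s = f 0 := by
  have hdyadic : ∀ n : ℕ, ∀ s : ℝ, 0 ≤ s → s ≤ 1 - (1 / 2) ^ n → f s = f 0 := by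
    intro n
    induction n with
    | zero => intro s hs₀ hs; rw [le_antisymm (by simpa using hs) hs₀, ofReal_zero]
    | succ n ih =>
      intro s hs₀ hs
      have hpow₀ : (0 : ℝ) < (1 / 2) ^ n := by positivity
      have hpow₁ : ((1 : ℝ) / 2) ^ n ≤ 1 := pow_le_one₀ (by norm_num) (by norm_num)
      rcases le_or_gt s (1 - (1 / 2) ^ n) with hle | hlt
      · exact ih s hs₀ hle
      · rw [pow_succ] at hs
        rw [apply_ofReal_eq hB (r := 1 - (1 / 2) ^ n) (by linarith) (by linarith) hlt.le
          (by linarith), ih _ (by linarith) le_rfl]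
  obtain ⟨n, hn⟩ := exists_pow_lt_of_lt_one (sub_pos.2 hs) (by norm_num : (1 / 2 : ℝ) < 1)
  exact hdyadic n s hs₀ (by linarith)

lemma apply_eq_apply_zero {w : ℂ} (hw : w ∈ unitDisc) : f w = f 0 := by
  rw [apply_eq_apply_norm hB hw]
  exact apply_ofReal_eq_apply_zero hB (norm_nonneg w) hw

end Chain

section Seminorm

variable {f : ℂ → ℂ} {z ζ : ℂ}

lemma norm_avg_le {M : ℝ} (hM : ∀ w ∈ unitDisc, ‖f w‖ ≤ M) (hz : z ∈ unitDisc) :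
    ‖avg f z‖ ≤ M := by
  have hT := dA_Bz_toReal_pos hz
  rw [avg, avgOn, norm_smul, norm_inv, Real.norm_of_nonneg hT.le, inv_mul_le_iff₀ hT, mul_comm]
  exact norm_setIntegral_le_of_norm_le_const (isCompact_polarRect _ _ _ _).measure_lt_top
    fun w hw => hM w (Bz_subset_unitDisc hz hw)

lemma wQuot_le_two_mul {M : ℝ} (hM : ∀ w ∈ unitDisc, ‖f w‖ ≤ M) (hz : z ∈ unitDisc)
    (hζ : ζ ∈ Bz z) : wQuot f z ζ ≤ 2 * M := by
  have hT := dA_Bz_toReal_pos hz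
  have hM₀ : 0 ≤ M := (norm_nonneg _).trans (hM z hz)
  have hBzz := Bzz_subset_Bz hz hζ
  rw [wQuot, inv_mul_le_iff₀ hT]
  calc ‖∫ ξ in Bzz z ζ, (f ξ - avg f z) ∂dA‖ ≤ 2 * M * (dA (Bzz z ζ)).toReal :=
        norm_setIntegral_le_of_norm_le_const (isCompact_polarRect _ _ _ _).measure_lt_top
          fun ξ hξ => (norm_sub_le _ _).trans (by
            linarith [hM ξ (Bz_subset_unitDisc hz (hBzz hξ)), norm_avg_le hM hz])
    _ ≤ 2 * M * (dA (Bz z)).toReal := by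
        gcongr
        exact (isCompact_polarRect _ _ _ _).measure_lt_top.ne
    _ = (dA (Bz z)).toReal * (2 * M) := mul_comm _ _

lemma wQuot_eq_zero_of_eq_const {c : ℂ} (hf : ∀ w ∈ unitDisc, f w = c) (hz : z ∈ unitDisc)
    (hζ : ζ ∈ Bz z) : wQuot f z ζ = 0 := by
  have hBz := Bz_subset_unitDisc hz
  have havg : avg f z = c := by
    rw [avg, avgOn, setIntegral_congr_fun (s := Bz z) (isCompact_polarRect _ _ _ _).measurableSet
      fun w hw => hf w (hBz hw), setIntegral_const, smul_smul, measureReal_def,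
      inv_mul_cancel₀ (dA_Bz_toReal_pos hz).ne', one_smul]
  rw [wQuot, havg, setIntegral_congr_fun (s := Bzz z ζ) (isCompact_polarRect _ _ _ _).measurableSet
    fun ξ hξ => sub_eq_zero.2 (hf ξ (hBz (Bzz_subset_Bz hz hζ hξ))), integral_zero, norm_zero,
    mul_zero]

end Seminorm

/-- For a bounded continuous function `f` on `𝔻`, `‖f‖_BWMO = 0` if and
only if `f` is constant on `𝔻`. -/
theorem bwmoNorm_eq_zero_iff (f : ℂ → ℂ) (hc : ContinuousOn f unitDisc)
    (hb : ∃ M : ℝ, ∀ z ∈ unitDisc, ‖f z‖ ≤ M) :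
    bwmoNorm f = 0 ↔ ∃ c : ℂ, ∀ z ∈ unitDisc, f z = c := by
  constructor
  · intro h
    obtain ⟨M, hM⟩ := hb
    have hbdd : BddAbove {c : ℝ | ∃ z ∈ unitDisc, ∃ ζ ∈ Bz z, c = wQuot f z ζ} :=
      ⟨2 * M, by rintro _ ⟨z, hz, ζ, hζ, rfl⟩; exact wQuot_le_two_mul hM hz hζ⟩
    have hzero : ∀ z ∈ unitDisc, ∀ ζ ∈ Bz z, wQuot f z ζ = 0 := fun z hz ζ hζ =>
      le_antisymm ((le_csSup hbdd ⟨z, hz, ζ, hζ, rfl⟩).trans_eq h) wQuot_nonneg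
    exact ⟨f 0, fun w hw => apply_eq_apply_zero
      (fun z hz _ => eq_of_mem_Bz_of_wQuot_eq_zero hc hz (hzero z hz)) hw⟩
  · rintro ⟨c, hf⟩
    have h₀ : (0 : ℂ) ∈ unitDisc := by simp [unitDisc]
    have hS : {c : ℝ | ∃ z ∈ unitDisc, ∃ ζ ∈ Bz z, c = wQuot f z ζ} = {0} := by
      refine eq_singleton_iff_unique_mem.2 ⟨⟨0, h₀, 0, mem_Bz_self h₀, ?_⟩, ?_⟩
      · exact (wQuot_eq_zero_of_eq_const hf h₀ (mem_Bz_self h₀)).symm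
      · rintro _ ⟨z, hz, ζ, hζ, rfl⟩
        exact wQuot_eq_zero_of_eq_const hf hz hζ
    rw [bwmoNorm, hS, csSup_singleton]
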